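/- Let A be an invertible n×n real matrix, b ∈ ℝ^n, and y = A^{-1}b. Consider the linear map DG : M_n(ℝ) × ℝ^n → ℝ^n given by DG(Ȧ, ḃ) = A^{-1}(ḃ − Ȧ y), where M_n(ℝ) carries the Frobenius inner product and ℝ^n the Euclidean inner product. Then the operator norm of DG equals ‖A^{-1}‖ · √(1 + ‖y‖²), and the Frobenius (Hilbert–Schmidt) norm of DG equals ‖A^{-1}‖_F · √(1 + ‖y‖²). -/

import Mathlib

open MeasureTheory Matrix

/-!
Write `t = √(1 + ‖y‖²)`. For an input `(Ȧ, ḃ)` of norm one, the triangle inequality and the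
bound of the Euclidean operator norm by the Frobenius norm give
`‖ḃ - Ȧ y‖ ≤ ‖ḃ‖ + ‖Ȧ‖_F ‖y‖ ≤ t` (Cauchy–Schwarz in `ℝ²`), hence `‖DG(Ȧ, ḃ)‖ ≤ ‖A⁻¹‖ t`.
Conversely, if `‖u‖ = 1` and `‖A⁻¹ u‖ = ‖A⁻¹‖`, the input `ḃ = u / t`, `Ȧ = -u yᵀ / t` has norm one
and `ḃ - Ȧ y = t u`. For the Frobenius norm, `DG` sends the basis matrix `E_ij` to `-y_j A⁻¹ e_i`
and the basis vector `e_k` to `A⁻¹ e_k`, so the squared norms add up to `(‖y‖² + 1) ‖A⁻¹‖_F²`.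
-/

theorem ContinuousLinearMap.exists_norm_eq_one_norm_apply_eq_opNorm {E F : Type*}
    [NormedAddCommGroup E] [NormedSpace ℝ E] [ProperSpace E] [Nontrivial E]
    [NormedAddCommGroup F] [NormedSpace ℝ F] (f : E →L[ℝ] F) :
    ∃ x : E, ‖x‖ = 1 ∧ ‖f x‖ = ‖f‖ := by
  obtain ⟨x, hx, hmax⟩ := ((isCompact_sphere (0 : E) 1).image (by fun_prop)).sSup_mem
    ((NormedSpace.sphere_nonempty.mpr zero_le_one).image fun x => ‖f x‖)
  exact ⟨x, mem_sphere_zero_iff_norm.mp hx, hmax.trans f.sSup_sphere_eq_norm⟩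

theorem Real.add_sqrt_mul_le_sqrt_mul_sqrt (a c : ℝ) {S : ℝ} (hS : 0 ≤ S) :
    a + √S * c ≤ √(S + a ^ 2) * √(1 + c ^ 2) := by
  rw [← Real.sqrt_mul (by positivity)]
  apply Real.le_sqrt_of_sq_le
  nlinarith [sq_nonneg (a * c - √S), Real.sq_sqrt hS]

namespace Matrix

variable {m n p : Type*}

theorem norm_toEuclideanLin_le [Fintype m] [Fintype n] [DecidableEq n] (M : Matrix m n ℝ)
    (v : EuclideanSpace ℝ n) :
    ‖toEuclideanLin M v‖ ≤ √(∑ i, ∑ j, M i j ^ 2) * ‖v‖ := by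
  rw [← Real.sqrt_sq (norm_nonneg v), ← Real.sqrt_mul (by positivity)]
  apply Real.le_sqrt_of_sq_le
  rw [EuclideanSpace.real_norm_sq_eq, EuclideanSpace.real_norm_sq_eq, Finset.sum_mul]
  exact Finset.sum_le_sum fun i _ => Finset.sum_mul_sq_le_sq_mul_sq _ _ _

theorem toEuclideanLin_vecMulVec_apply [Fintype n] [DecidableEq n] (x : EuclideanSpace ℝ m)
    (y v : EuclideanSpace ℝ n) :
    toEuclideanLin (vecMulVec x y) v = inner ℝ y v • x := by
  ext i
  simp [vecMulVec_apply, mulVec, dotProduct, PiLp.inner_apply, Finset.mul_sum, mul_comm,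
    mul_assoc]

theorem sum_sum_vecMulVec_sq [Fintype m] [Fintype n] (x : EuclideanSpace ℝ m)
    (y : EuclideanSpace ℝ n) :
    ∑ i, ∑ j, vecMulVec x y i j ^ 2 = ‖x‖ ^ 2 * ‖y‖ ^ 2 := by
  simp only [vecMulVec_apply, mul_pow, EuclideanSpace.real_norm_sq_eq, Finset.sum_mul_sum]

theorem toEuclideanLin_single_apply [Fintype n] [DecidableEq m] [DecidableEq n] (i : m) (j : n)
    (c : ℝ) (v : EuclideanSpace ℝ n) :
    toEuclideanLin (single i j c) v = EuclideanSpace.single i (c * v j) := by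
  ext k
  simp [single_mulVec, Function.update_apply, PiLp.single_apply]

theorem norm_sq_toEuclideanLin_single [Fintype m] [Fintype n] [DecidableEq n] (M : Matrix m n ℝ)
    (j : n) (c : ℝ) :
    ‖toEuclideanLin M (EuclideanSpace.single j c)‖ ^ 2 = c ^ 2 * ∑ i, M i j ^ 2 := by
  simp [EuclideanSpace.real_norm_sq_eq, mul_pow, Finset.mul_sum, mul_comm]

theorem sum_norm_sq_toEuclideanLin_single [Fintype m] [Fintype n] [DecidableEq n]
    (M : Matrix m n ℝ) :
    ∑ j, ‖toEuclideanLin M (EuclideanSpace.single j 1)‖ ^ 2 = ∑ i, ∑ j, M i j ^ 2 := by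
  simp only [norm_sq_toEuclideanLin_single, one_pow, one_mul]
  exact Finset.sum_comm

theorem norm_toEuclideanLin_sub_toEuclideanLin_le [Fintype m] [Fintype n] [Fintype p]
    [DecidableEq n] [DecidableEq p] (M : Matrix m n ℝ) (dA : Matrix n p ℝ)
    (db : EuclideanSpace ℝ n) (y : EuclideanSpace ℝ p) :
    ‖toEuclideanLin M (db - toEuclideanLin dA y)‖ ≤
      ‖(toEuclideanLin M).toContinuousLinearMap‖ *
        (√(∑ i, ∑ j, dA i j ^ 2 + ‖db‖ ^ 2) * √(1 + ‖y‖ ^ 2)) := by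
  calc ‖toEuclideanLin M (db - toEuclideanLin dA y)‖
      ≤ ‖(toEuclideanLin M).toContinuousLinearMap‖ * ‖db - toEuclideanLin dA y‖ :=
        (toEuclideanLin M).toContinuousLinearMap.le_opNorm _
    _ ≤ ‖(toEuclideanLin M).toContinuousLinearMap‖ *
          (‖db‖ + √(∑ i, ∑ j, dA i j ^ 2) * ‖y‖) := by
        gcongr
        exact (norm_sub_le _ _).trans (add_le_add_right (norm_toEuclideanLin_le dA y) _)
    _ ≤ _ := by
        gcongr
        exact Real.add_sqrt_mul_le_sqrt_mul_sqrt _ _ (by positivity)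

theorem exists_sub_toEuclideanLin_eq_smul [Fintype n] [Fintype p] [DecidableEq p]
    (y : EuclideanSpace ℝ p) {u : EuclideanSpace ℝ n} (hu : ‖u‖ = 1) :
    ∃ (dA : Matrix n p ℝ) (db : EuclideanSpace ℝ n),
      √(∑ i, ∑ j, dA i j ^ 2 + ‖db‖ ^ 2) = 1 ∧
        db - toEuclideanLin dA y = √(1 + ‖y‖ ^ 2) • u := by
  set t := √(1 + ‖y‖ ^ 2)
  have ht : t ^ 2 = 1 + ‖y‖ ^ 2 := Real.sq_sqrt (by positivity)
  have htpos : 0 < t := Real.sqrt_pos.mpr (by positivity)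
  have hnorm : ‖t⁻¹ • u‖ = t⁻¹ := by
    rw [norm_smul, hu, Real.norm_of_nonneg (by positivity), mul_one]
  refine ⟨-vecMulVec (t⁻¹ • u) y, t⁻¹ • u, ?_, ?_⟩
  · simp only [neg_apply, neg_sq, sum_sum_vecMulVec_sq, hnorm]
    rw [Real.sqrt_eq_one]
    field_simp
    linarith
  · rw [map_neg, LinearMap.neg_apply, toEuclideanLin_vecMulVec_apply, sub_neg_eq_add,
      real_inner_self_eq_norm_sq]
    match_scalars
    field_simp
    linarith

theorem isGreatest_norm_toEuclideanLin_sub [Fintype m] [Fintype n] [Fintype p] [Nonempty n]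
    [DecidableEq n] [DecidableEq p] (M : Matrix m n ℝ) (y : EuclideanSpace ℝ p) :
    IsGreatest
      {c : ℝ | ∃ (dA : Matrix n p ℝ) (db : EuclideanSpace ℝ n),
        √(∑ i, ∑ j, dA i j ^ 2 + ‖db‖ ^ 2) = 1 ∧
          c = ‖toEuclideanLin M (db - toEuclideanLin dA y)‖}
      (‖(toEuclideanLin M).toContinuousLinearMap‖ * √(1 + ‖y‖ ^ 2)) := by
  refine ⟨?_, ?_⟩
  · obtain ⟨u, hu, hMu⟩ :=
      (toEuclideanLin M).toContinuousLinearMap.exists_norm_eq_one_norm_apply_eq_opNorm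
    obtain ⟨dA, db, hnorm, hdG⟩ := exists_sub_toEuclideanLin_eq_smul y hu
    refine ⟨dA, db, hnorm, ?_⟩
    rw [hdG, map_smul, norm_smul, Real.norm_of_nonneg (Real.sqrt_nonneg _), mul_comm, ← hMu]
    rfl
  · rintro c ⟨dA, db, hnorm, rfl⟩
    simpa [hnorm] using norm_toEuclideanLin_sub_toEuclideanLin_le M dA db y

theorem sqrt_sum_norm_sq_toEuclideanLin_sub_single [Fintype m] [Fintype n] [Fintype p]
    [DecidableEq n] [DecidableEq p] (M : Matrix m n ℝ) (y : EuclideanSpace ℝ p) :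
    √((∑ i, ∑ j, ‖toEuclideanLin M (0 - toEuclideanLin (single i j 1) y)‖ ^ 2) +
        ∑ k, ‖toEuclideanLin M
          (EuclideanSpace.single k 1 - toEuclideanLin (0 : Matrix n p ℝ) y)‖ ^ 2)
      = √(∑ i, ∑ j, M i j ^ 2) * √(1 + ‖y‖ ^ 2) := by
  have hsingle : ∑ i, ∑ j, ‖toEuclideanLin M (0 - toEuclideanLin (single i j 1) y)‖ ^ 2 =
      ‖y‖ ^ 2 * ∑ i, ∑ j, M i j ^ 2 := by
    simp only [zero_sub, map_neg, norm_neg, toEuclideanLin_single_apply, one_mul,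
      norm_sq_toEuclideanLin_single, ← Finset.sum_mul, ← EuclideanSpace.real_norm_sq_eq,
      ← Finset.mul_sum]
    rw [Finset.sum_comm]
  have hzero : ∑ k, ‖toEuclideanLin M
      (EuclideanSpace.single k 1 - toEuclideanLin (0 : Matrix n p ℝ) y)‖ ^ 2 =
        ∑ i, ∑ j, M i j ^ 2 := by
    simp only [map_zero, LinearMap.zero_apply, sub_zero]
    exact sum_norm_sq_toEuclideanLin_single M
  rw [hsingle, hzero, ← Real.sqrt_mul (by positivity)]
  ring_nf

end Matrix

theorem stmt_9_general (n : ℕ) (hn : 1 ≤ n) (A : Matrix (Fin n) (Fin n) ℝ)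
    (y : EuclideanSpace ℝ (Fin n)) :
    IsGreatest
      {c : ℝ | ∃ (dA : Matrix (Fin n) (Fin n) ℝ) (db : EuclideanSpace ℝ (Fin n)),
        Real.sqrt ((∑ i, ∑ j, dA i j ^ 2) + ‖db‖ ^ 2) = 1 ∧
        c = ‖Matrix.toEuclideanLin A⁻¹ (db - Matrix.toEuclideanLin dA y)‖}
      (‖LinearMap.toContinuousLinearMap (Matrix.toEuclideanLin A⁻¹)‖ *
        Real.sqrt (1 + ‖y‖ ^ 2)) ∧
    Real.sqrt
        ((∑ i, ∑ j, ‖Matrix.toEuclideanLin A⁻¹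
            ((0 : EuclideanSpace ℝ (Fin n)) -
              Matrix.toEuclideanLin (Matrix.single i j 1) y)‖ ^ 2) +
          ∑ k, ‖Matrix.toEuclideanLin A⁻¹
            (EuclideanSpace.single k 1 - Matrix.toEuclideanLin (0 : Matrix (Fin n) (Fin n) ℝ) y)‖ ^ 2)
      = Real.sqrt (∑ i, ∑ j, (A⁻¹ i j) ^ 2) * Real.sqrt (1 + ‖y‖ ^ 2) := by
  have : Nonempty (Fin n) := ⟨⟨0, hn⟩⟩
  exact ⟨isGreatest_norm_toEuclideanLin_sub A⁻¹ y,
    sqrt_sum_norm_sq_toEuclideanLin_sub_single A⁻¹ y⟩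

/-- **Condition matrix of general linear system solving.**
Let `A` be an invertible `n×n` real matrix, `b ∈ ℝ^n`, `y = A⁻¹ b`, and consider
the linear map `DG(Ȧ, ḃ) = A⁻¹(ḃ - Ȧ y)` on `M_n(ℝ) × ℝ^n` with the product of
the Frobenius and the Euclidean inner products.  Then the operator norm of `DG`
(the greatest value of `‖DG(Ȧ, ḃ)‖` over inputs of norm 1) equals
`‖A⁻¹‖ · √(1 + ‖y‖²)`, and the Frobenius (Hilbert–Schmidt) norm of `DG`
(computed over the standard orthonormal basis of the product space) equals
`‖A⁻¹‖_F · √(1 + ‖y‖²)`. -/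
theorem stmt_9 (n : ℕ) (hn : 1 ≤ n) (A : Matrix (Fin n) (Fin n) ℝ)
    (hA : IsUnit A.det) (b : EuclideanSpace ℝ (Fin n))
    (y : EuclideanSpace ℝ (Fin n)) (hy : y = Matrix.toEuclideanLin A⁻¹ b) :
    IsGreatest
      {c : ℝ | ∃ (dA : Matrix (Fin n) (Fin n) ℝ) (db : EuclideanSpace ℝ (Fin n)),
        Real.sqrt ((∑ i, ∑ j, dA i j ^ 2) + ‖db‖ ^ 2) = 1 ∧
        c = ‖Matrix.toEuclideanLin A⁻¹ (db - Matrix.toEuclideanLin dA y)‖}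
      (‖LinearMap.toContinuousLinearMap (Matrix.toEuclideanLin A⁻¹)‖ *
        Real.sqrt (1 + ‖y‖ ^ 2)) ∧
    Real.sqrt
        ((∑ i, ∑ j, ‖Matrix.toEuclideanLin A⁻¹
            ((0 : EuclideanSpace ℝ (Fin n)) -
              Matrix.toEuclideanLin (Matrix.single i j 1) y)‖ ^ 2) +
          ∑ k, ‖Matrix.toEuclideanLin A⁻¹
            (EuclideanSpace.single k 1 - Matrix.toEuclideanLin (0 : Matrix (Fin n) (Fin n) ℝ) y)‖ ^ 2)
      = Real.sqrt (∑ i, ∑ j, (A⁻¹ i j) ^ 2) * Real.sqrt (1 + ‖y‖ ^ 2) :=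
  stmt_9_general n hn A y
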